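/- arXiv:2003.06684 — 2 statements merged into one kernel-verified Lean document; each statement's English description precedes it below -/
import Mathlib

section
/- Let p ∈ [1,∞), let P₀ be a Borel probability measure on ℝ^d with finite p-th moment, and let P be a Borel probability measure on ℝ^d with infinite p-th moment, i.e., ∫ ‖x‖^p dP(x) = ∞. For an i.i.d. sample X₁,…,Xₙ from P with empirical distribution P̂_n, let T_n = W_p^p(P̂_n, P₀). Then T_n → ∞ in Pⁿ-probability: for every M > 0, lim_{n→∞} Pⁿ[T_n > M] = 1. -/
open MeasureTheory ENNReal Filter Topology

noncomputable section

/-- `ℝ^d` as Euclidean space. -/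
abbrev Euc (d : ℕ) : Type := EuclideanSpace ℝ (Fin d)

/-- The set of couplings of two Borel probability measures: probability measures on the
product space whose first marginal is `P` and second marginal is `Q`. -/
def couplings {E : Type*} [MeasurableSpace E] (P Q : Measure E) : Set (Measure (E × E)) :=
  {γ | IsProbabilityMeasure γ ∧ γ.map Prod.fst = P ∧ γ.map Prod.snd = Q}

/-- `W_p^p(P,Q)`: the `p`-th power of the `p`-Wasserstein distance,
`inf_{γ ∈ Γ(P,Q)} ∫ ‖x - y‖^p dγ(x,y)`, as an extended nonnegative real. -/
def WpPow {E : Type*} [MeasurableSpace E] [NormedAddCommGroup E] (p : ℝ) (P Q : Measure E) :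
    ℝ≥0∞ :=
  ⨅ γ ∈ couplings P Q, ∫⁻ z, ENNReal.ofReal (‖z.1 - z.2‖ ^ p) ∂γ

/-- The `p`-Wasserstein distance `W_p(P,Q)`. -/
def Wp {E : Type*} [MeasurableSpace E] [NormedAddCommGroup E] (p : ℝ) (P Q : Measure E) :
    ℝ≥0∞ :=
  WpPow p P Q ^ (1 / p)

/-- Empirical distribution `n⁻¹ ∑ᵢ δ_{x i}` of `n` points. -/
def empDist {E : Type*} [MeasurableSpace E] {n : ℕ} (x : Fin n → E) : Measure E :=
  (n : ℝ≥0∞)⁻¹ • ∑ i, Measure.dirac (x i)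

/-- The `n`-fold product measure `P^n` on `(ℝ^d)^n`. -/
def prodn {E : Type*} [MeasurableSpace E] (P : Measure E) (n : ℕ) : Measure (Fin n → E) :=
  Measure.pi fun _ => P

/-- `P` has a finite moment of order `p`. -/
def HasFinMom {E : Type*} [MeasurableSpace E] [NormedAddCommGroup E] (p : ℝ) (P : Measure E) :
    Prop :=
  ∫⁻ x, ENNReal.ofReal (‖x‖ ^ p) ∂P ≠ ∞

/-!
Along any coupling of `Q` with `P₀`, `‖x‖^p ≤ 2^(p-1) (‖x - y‖^p + ‖y‖^p)`, so `W_p^p(Q, P₀)`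
exceeds `M` as soon as the `p`-th moment of `Q` exceeds `2^(p-1) (M + 1 + ∫ ‖y‖^p dP₀)`.
The `p`-th moment of `P̂_n` is the sample mean of the `‖Xᵢ‖^p`. Truncating `‖x‖^p` at a level `m`
where its mean under `P` is already above that threshold, Chebyshev's inequality for the bounded
truncated variables shows that the sample mean exceeds the threshold with probability tending
to one.
-/

open ProbabilityTheory

section SampleMean

variable {E : Type*} [MeasurableSpace E] {P : Measure E} [IsProbabilityMeasure P]

theorem pi_meas_abs_sampleMean_sub_ge_le {X : E → ℝ} (hX : MemLp X 2 P) {ε : ℝ}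
    (hε : 0 < ε) {n : ℕ} (hn : n ≠ 0) :
    Measure.pi (fun _ : Fin n => P) {x | ε ≤ |(n : ℝ)⁻¹ * ∑ i, X (x i) - P[X]|}
      ≤ ENNReal.ofReal (Var[X; P] / ε ^ 2 / n) := by
  set μ := Measure.pi (fun _ : Fin n => P)
  set S : (Fin n → E) → ℝ := ∑ i, fun x => X (x i) with hS_def
  have hSx : ∀ x, S x = ∑ i, X (x i) := fun x => Finset.sum_apply x _ _
  have hXi : ∀ i, MemLp (fun x : Fin n → E => X (x i)) 2 μ := fun i =>
    hX.comp_measurePreserving (measurePreserving_eval _ i)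
  have hS : MemLp S 2 μ := memLp_finsetSum' _ fun i _ => hXi i
  have hmean : ∫ y, S y ∂μ = n * P[X] := by
    simp_rw [hSx]
    rw [integral_finsetSum _ fun i _ => (hXi i).integrable one_le_two]
    simp [μ, integral_comp_eval (μ := fun _ : Fin n => P) hX.aestronglyMeasurable]
  have hvar : Var[S; μ] = n * Var[X; P] := by
    rw [hS_def, variance_sum_pi fun _ => hX]
    simp
  have hn' : (0 : ℝ) < n := Nat.cast_pos.2 (Nat.pos_of_ne_zero hn)
  have hset : {x | ε ≤ |(n : ℝ)⁻¹ * ∑ i, X (x i) - P[X]|}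
      = {x | n * ε ≤ |S x - ∫ y, S y ∂μ|} := by
    ext x
    rw [Set.mem_ofPred_eq, Set.mem_ofPred_eq, hSx, hmean, ← mul_le_mul_iff_of_pos_left hn',
      ← abs_of_pos hn', ← abs_mul, abs_of_pos hn', mul_sub, ← mul_assoc, mul_inv_cancel₀ hn'.ne',
      one_mul]
  calc μ {x | ε ≤ |(n : ℝ)⁻¹ * ∑ i, X (x i) - P[X]|}
      = μ {x | n * ε ≤ |S x - ∫ y, S y ∂μ|} := by rw [hset]
    _ ≤ ENNReal.ofReal (Var[S; μ] / (n * ε) ^ 2) := meas_ge_le_variance_div_sq hS (by positivity)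
    _ = ENNReal.ofReal (Var[X; P] / ε ^ 2 / n) := by
      rw [hvar]
      congr 1
      field_simp

theorem tendsto_pi_measure_lt_sampleMean {X : E → ℝ} (hX : MemLp X 2 P) {b : ℝ}
    (hb : b < P[X]) :
    Tendsto (fun n : ℕ => Measure.pi (fun _ : Fin n => P) {x | b < (n : ℝ)⁻¹ * ∑ i, X (x i)})
      atTop (𝓝 1) := by
  have hε : 0 < P[X] - b := sub_pos.2 hb
  have hbound : Tendsto (fun n : ℕ => 1 - ENNReal.ofReal (Var[X; P] / (P[X] - b) ^ 2 / n))
      atTop (𝓝 1) := by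
    have h := (ENNReal.continuous_ofReal.tendsto 0).comp
      (tendsto_const_div_atTop_nhds_zero_nat (Var[X; P] / (P[X] - b) ^ 2))
    simpa using ENNReal.Tendsto.sub tendsto_const_nhds h (Or.inl one_ne_top)
  refine tendsto_of_tendsto_of_tendsto_of_le_of_le' hbound tendsto_const_nhds ?_
    (Eventually.of_forall fun n => prob_le_one)
  filter_upwards [eventually_ne_atTop 0] with n hn
  set s := {x : Fin n → E | b < (n : ℝ)⁻¹ * ∑ i, X (x i)}
  have hcompl : sᶜ ⊆ {x | P[X] - b ≤ |(n : ℝ)⁻¹ * ∑ i, X (x i) - P[X]|} := fun x hx => by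
    simp only [s, Set.mem_compl_iff, Set.mem_ofPred_eq, not_lt] at hx ⊢
    rw [abs_sub_comm]
    exact (sub_le_sub_left hx _).trans (le_abs_self _)
  rw [tsub_le_iff_right]
  calc 1 ≤ Measure.pi (fun _ : Fin n => P) s + Measure.pi (fun _ : Fin n => P) sᶜ := by
        simpa using measure_univ_le_add_compl (μ := Measure.pi fun _ : Fin n => P) s
    _ ≤ _ := add_le_add_right ((measure_mono hcompl).trans
        (pi_meas_abs_sampleMean_sub_ge_le hX hε hn)) _

theorem tendsto_pi_measure_lt_sampleMean_of_lintegral_eq_top {f : E → ℝ≥0∞}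
    (hf : Measurable f) (hfP : ∫⁻ y, f y ∂P = ∞) {c : ℝ≥0∞} (hc : c ≠ ∞) :
    Tendsto (fun n : ℕ =>
        Measure.pi (fun _ : Fin n => P) {x | c < (n : ℝ≥0∞)⁻¹ * ∑ i, f (x i)}) atTop (𝓝 1) := by
  obtain ⟨m, hm⟩ : ∃ m : ℕ, c < ∫⁻ y, f y ⊓ m ∂P := by
    have hsup : ⨆ m : ℕ, ∫⁻ y, f y ⊓ m ∂P = ∞ := by
      rw [← lintegral_iSup (fun m => hf.min measurable_const)
        fun m m' hmm' y => inf_le_inf_left _ (Nat.cast_le.2 hmm')]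
      simp_rw [← inf_iSup_eq, ENNReal.iSup_natCast, inf_top_eq, hfP]
    exact lt_iSup_iff.1 (hsup ▸ hc.lt_top)
  have hfm : ∀ y, f y ⊓ m ≠ ∞ := fun y => ne_top_of_le_ne_top (natCast_ne_top m) inf_le_right
  set X : E → ℝ := fun y => (f y ⊓ m).toReal
  have hX : MemLp X 2 P := by
    refine MemLp.of_bound (hf.min measurable_const).ennreal_toReal.aestronglyMeasurable m
      (ae_of_all _ fun y => ?_)
    rw [Real.norm_of_nonneg toReal_nonneg]
    exact toReal_le_of_le_ofReal (Nat.cast_nonneg m) (by simp)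
  have hmP : ∫⁻ y, f y ⊓ m ∂P ≠ ∞ :=
    ne_top_of_le_ne_top (natCast_ne_top m)
      ((lintegral_mono fun y => inf_le_right).trans_eq (by simp))
  have hb : c.toReal < P[X] := by
    rw [integral_toReal (f := fun y => f y ⊓ m) (hf.min measurable_const).aemeasurable
      (ae_of_all _ fun y => (hfm y).lt_top)]
    exact (toReal_lt_toReal hc hmP).2 hm
  refine tendsto_of_tendsto_of_tendsto_of_le_of_le (tendsto_pi_measure_lt_sampleMean hX hb)
    tendsto_const_nhds (fun n => measure_mono fun x hx => ?_) fun n => prob_le_one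
  calc c < ENNReal.ofReal ((n : ℝ)⁻¹ * ∑ i, X (x i)) := (lt_ofReal_iff_toReal_lt hc).2 hx
    _ = ENNReal.ofReal (n : ℝ)⁻¹ * ∑ i, (f (x i) ⊓ m) := by
      rw [ENNReal.ofReal_mul (by positivity), ofReal_sum_of_nonneg fun i _ => toReal_nonneg]
      simp [hfm]
    _ ≤ (n : ℝ≥0∞)⁻¹ * ∑ i, f (x i) := by
      gcongr
      · simpa using ofReal_inv_le (x := n)
      · exact inf_le_left

end SampleMean

section Wasserstein

variable {E : Type*} [NormedAddCommGroup E]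

theorem ofReal_norm_rpow_le_mul_add {p : ℝ} (hp : 1 ≤ p) (x y : E) :
    ENNReal.ofReal (‖x‖ ^ p)
      ≤ 2 ^ (p - 1) * (ENNReal.ofReal (‖x - y‖ ^ p) + ENNReal.ofReal (‖y‖ ^ p)) := by
  have hp0 : 0 ≤ p := zero_le_one.trans hp
  simp_rw [← ofReal_rpow_of_nonneg (norm_nonneg _) hp0]
  calc ENNReal.ofReal ‖x‖ ^ p ≤ (ENNReal.ofReal ‖x - y‖ + ENNReal.ofReal ‖y‖) ^ p := by
        rw [← ENNReal.ofReal_add (norm_nonneg _) (norm_nonneg _)]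
        gcongr
        exact norm_le_norm_sub_add x y
    _ ≤ _ := ENNReal.rpow_add_le_mul_rpow_add_rpow _ _ hp

variable [MeasurableSpace E]

def pMoment (p : ℝ) (μ : Measure E) : ℝ≥0∞ :=
  ∫⁻ x, ENNReal.ofReal (‖x‖ ^ p) ∂μ

variable [OpensMeasurableSpace E]

theorem pMoment_le_of_mem_couplings {p : ℝ} (hp : 1 ≤ p) {Q P₀ : Measure E}
    {γ : Measure (E × E)} (hγ : γ ∈ couplings Q P₀) :
    pMoment p Q ≤ 2 ^ (p - 1) * (∫⁻ z, ENNReal.ofReal (‖z.1 - z.2‖ ^ p) ∂γ + pMoment p P₀) := by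
  obtain ⟨-, hfst, hsnd⟩ := hγ
  have hf : Measurable fun x : E => ENNReal.ofReal (‖x‖ ^ p) :=
    (measurable_norm.pow_const p).ennreal_ofReal
  rw [pMoment, pMoment, ← hfst, ← hsnd, lintegral_map hf measurable_fst,
    lintegral_map hf measurable_snd,
    ← lintegral_add_right (g := fun z : E × E => ENNReal.ofReal (‖z.2‖ ^ p)) _
      (hf.comp measurable_snd),
    ← lintegral_const_mul' _ _ (by simp)]
  exact lintegral_mono fun z => ofReal_norm_rpow_le_mul_add hp z.1 z.2

theorem le_wpPow_of_pMoment_le {p : ℝ} (hp : 1 ≤ p) {Q P₀ : Measure E}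
    (hP₀ : pMoment p P₀ ≠ ∞) {a : ℝ≥0∞} (h : 2 ^ (p - 1) * (a + pMoment p P₀) ≤ pMoment p Q) :
    a ≤ WpPow p Q P₀ :=
  le_iInf₂ fun γ hγ => (ENNReal.add_le_add_iff_right hP₀).1 <|
    (ENNReal.mul_le_mul_iff_right (by simp) (by simp)).1 <|
      h.trans (pMoment_le_of_mem_couplings hp hγ)

end Wasserstein

theorem lintegral_empDist {E : Type*} [MeasurableSpace E] {n : ℕ} (x : Fin n → E)
    {f : E → ℝ≥0∞} (hf : Measurable f) :
    ∫⁻ y, f y ∂(empDist x) = (n : ℝ≥0∞)⁻¹ * ∑ i, f (x i) := by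
  rw [empDist, lintegral_smul_measure, lintegral_finsetSum_measure]
  simp_rw [lintegral_dirac' _ hf, smul_eq_mul]

theorem empirical_Wasserstein_statistic_tendsto_infty_general {d : ℕ} (p : ℝ) (hp : 1 ≤ p)
    (P₀ P : Measure (Euc d)) [IsProbabilityMeasure P]
    (hmom₀ : HasFinMom p P₀)
    (hmom : ∫⁻ x, ENNReal.ofReal (‖x‖ ^ p) ∂P = ∞)
    (M : ℝ) :
    Tendsto (fun n : ℕ =>
        prodn P n {x | ENNReal.ofReal M < WpPow p (empDist x) P₀})
      atTop (𝓝 1) := by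
  have hf : Measurable fun x : Euc d => ENNReal.ofReal (‖x‖ ^ p) :=
    (measurable_norm.pow_const p).ennreal_ofReal
  set c := 2 ^ (p - 1) * (ENNReal.ofReal M + 1 + pMoment p P₀)
  have hc : c ≠ ∞ := by
    have : pMoment p P₀ ≠ ∞ := hmom₀
    finiteness
  have hsub : ∀ n, {x : Fin n → Euc d | c < (n : ℝ≥0∞)⁻¹ * ∑ i, ENNReal.ofReal (‖x i‖ ^ p)}
      ⊆ {x | ENNReal.ofReal M < WpPow p (empDist x) P₀} := fun n x hx =>
    (ENNReal.lt_add_right ofReal_ne_top one_ne_zero).trans_le <|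
      le_wpPow_of_pMoment_le hp hmom₀ (hx.le.trans_eq (lintegral_empDist x hf).symm)
  unfold prodn
  exact tendsto_of_tendsto_of_tendsto_of_le_of_le
    (tendsto_pi_measure_lt_sampleMean_of_lintegral_eq_top hf hmom hc) tendsto_const_nhds
    (fun n => measure_mono (hsub n)) fun n => prob_le_one

/-- If `P₀` has finite `p`-th moment but `P` has infinite `p`-th moment, then
`T_n = W_p^p(P̂_n, P₀) → ∞` in `Pⁿ`-probability: for every `M > 0`, `Pⁿ[T_n > M] → 1`. -/
theorem empirical_Wasserstein_statistic_tendsto_infty {d : ℕ} (p : ℝ) (hp : 1 ≤ p)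
    (P₀ P : Measure (Euc d)) [IsProbabilityMeasure P₀] [IsProbabilityMeasure P]
    (hmom₀ : HasFinMom p P₀)
    (hmom : ∫⁻ x, ENNReal.ofReal (‖x‖ ^ p) ∂P = ∞)
    (M : ℝ) (hM : 0 < M) :
    Tendsto (fun n : ℕ =>
        prodn P n {x | ENNReal.ofReal M < WpPow p (empDist x) P₀})
      atTop (𝓝 1) :=
  empirical_Wasserstein_statistic_tendsto_infty_general p hp P₀ P hmom₀ hmom M
end
end

section
/- (Orthogonality of the quantile-process influence function and the score.) Let Θ ⊆ ℝ^k be open, θ ∈ Θ, and let X be a real random variable with distribution P_θ having continuous strictly positive density f_θ, cumulative distribution function F_θ, and quantile function F_θ^{-1}. Let ℓ̇_θ : ℝ → ℝ^k (the score) and ψ_θ : ℝ → ℝ^k (the influence function) be P_θ-square-integrable and satisfy: (i) E_θ[ℓ̇_θ(X)] = 0; (ii) E_θ[ψ_θ(X) ℓ̇_θ(X)ᵀ] = I_k (the k×k identity matrix); (iii) for a fixed u ∈ (0,1), the vector v := ∇_θ F_θ^{-1}(u) satisfies v = −(1/f_θ(F_θ^{-1}(u))) E_θ[ℓ̇_θ(X)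 1{X ≤ F_θ^{-1}(u)}]. Define g_θ(x, u) = (1{x ≤ F_θ^{-1}(u)} − u)/f_θ(F_θ^{-1}(u)) + ψ_θ(x)ᵀ v. Then E_θ[ ℓ̇_θ(X) · g_θ(X, u) ] = 0 ∈ ℝ^k. -/
/-! Expanding `g`, the cross-covariance splits into three terms. The indicator term is `-v` by the
gradient identity (iii), the constant term vanishes because the score is centered (i), and
`E[⟪ψ(X), v⟫ l(X)] = Σᵢ vᵢ E[ψᵢ(X) l(X)] = v` because (ii) makes `E[ψᵢ(X) l(X)]` the `i`-th basis
vector. -/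

open MeasureTheory Filter Topology

noncomputable section

theorem MeasureTheory.MemLp.integrable_smul {α 𝕜 E : Type*} [MeasurableSpace α] {μ : Measure α}
    [NormedField 𝕜] [NormedAddCommGroup E] [NormedSpace 𝕜 E] {p q : ENNReal}
    [ENNReal.HolderConjugate p q] {φ : α → 𝕜} {f : α → E} (hφ : MemLp φ p μ) (hf : MemLp f q μ) :
    Integrable (fun x => φ x • f x) μ :=
  memLp_one_iff_integrable.1 (hf.smul hφ)

section CrossMoments

variable {α ι : Type*} [MeasurableSpace α] {μ : Measure α} [Fintype ι] [DecidableEq ι]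
  {ψ l : α → EuclideanSpace ℝ ι}

theorem integral_apply_smul_eq_basisFun {i : ι} (hψl : Integrable (fun x => ψ x i • l x) μ)
    (h : ∀ j, ∫ x, ψ x i * l x j ∂μ = if i = j then 1 else 0) :
    ∫ x, ψ x i • l x ∂μ = EuclideanSpace.basisFun ι ℝ i := by
  ext j
  have hj : (∫ x, ψ x i • l x ∂μ) j = ∫ x, ψ x i * l x j ∂μ :=
    ((EuclideanSpace.proj j).integral_comp_comm hψl).symm
  simpa [hj, PiLp.single_apply, eq_comm] using h j

theorem integral_inner_smul_eq_of_cross_moments (hψ : MemLp ψ 2 μ) (hl : MemLp l 2 μ)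
    (h : ∀ i j, ∫ x, ψ x i * l x j ∂μ = if i = j then 1 else 0) (v : EuclideanSpace ℝ ι) :
    ∫ x, inner ℝ (ψ x) v • l x ∂μ = v := by
  have hψl (i : ι) : Integrable (fun x => ψ x i • l x) μ :=
    ((EuclideanSpace.proj i : EuclideanSpace ℝ ι →L[ℝ] ℝ).comp_memLp' hψ).integrable_smul hl
  have hvψl (i : ι) : Integrable (fun x => v i • (ψ x i • l x)) μ := (hψl i).smul (v i)
  calc ∫ x, inner ℝ (ψ x) v • l x ∂μ
      = ∫ x, ∑ i, v i • (ψ x i • l x) ∂μ := by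
        congr with x
        simp [PiLp.inner_apply, Finset.sum_smul, smul_smul]
    _ = ∑ i, v i • EuclideanSpace.basisFun ι ℝ i := by
        rw [integral_finsetSum _ fun i _ => hvψl i]
        simp_rw [integral_smul, integral_apply_smul_eq_basisFun (hψl _) (h _)]
    _ = v := (EuclideanSpace.basisFun ι ℝ).sum_repr v

end CrossMoments

theorem score_orthogonal_to_quantile_influence_general {k : ℕ}
    (P : Measure ℝ) [IsProbabilityMeasure P]
    (f : ℝ → ℝ)
    -- square-integrable score and influence function
    (l ψ : ℝ → EuclideanSpace ℝ (Fin k))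
    (hl2 : MemLp l 2 P) (hψ2 : MemLp ψ 2 P)
    (u : ℝ) (q : ℝ)
    -- (i) the score is centered
    (hl0 : (∫ x, l x ∂P) = 0)
    -- (ii) `E[ψ(X) l(X)ᵀ] = I_k`
    (horth : ∀ i j : Fin k, ∫ x, ψ x i * l x j ∂P = if i = j then (1 : ℝ) else 0)
    -- (iii) gradient identity for the quantile: `v = -(1/f(q)) E[l(X) 1{X ≤ q}]`
    (v : EuclideanSpace ℝ (Fin k))
    (hv : v = -(f q)⁻¹ • ∫ x, ((Set.Iic q).indicator (fun _ => (1 : ℝ)) x) • l x ∂P) :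
    ∫ x, (((Set.Iic q).indicator (fun _ => (1 : ℝ)) x - u) / f q
        + (inner ℝ (ψ x) v : ℝ)) • l x ∂P = 0 := by
  set ind : ℝ → ℝ := (Set.Iic q).indicator (fun _ => 1)
  have hl1 : Integrable l P := hl2.integrable one_le_two
  have hind : Integrable (fun x => ind x • l x) P := by
    simp_rw [ind, ← Set.indicator_smul_apply_left, one_smul]
    exact hl1.indicator measurableSet_Iic
  have hinner : Integrable (fun x => inner ℝ (ψ x) v • l x) P :=
    (hψ2.inner_const v).integrable_smul hl2
  have hquantile : (f q)⁻¹ • ∫ x, ind x • l x ∂P = -v := by rw [hv, neg_smul, neg_neg]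
  calc ∫ x, ((ind x - u) / f q + inner ℝ (ψ x) v) • l x ∂P
      = ∫ x, (f q)⁻¹ • (ind x • l x) - (u / f q) • l x + inner ℝ (ψ x) v • l x ∂P := by
        congr with x
        rw [add_smul, sub_div, sub_smul, div_eq_inv_mul, mul_smul]
    _ = (f q)⁻¹ • ∫ x, ind x • l x ∂P - (u / f q) • ∫ x, l x ∂P
          + ∫ x, inner ℝ (ψ x) v • l x ∂P := by
        rw [integral_add (by fun_prop) hinner, integral_sub (by fun_prop) (by fun_prop),
          integral_smul, integral_smul]
    _ = 0 := by
        rw [hquantile, hl0, integral_inner_smul_eq_of_cross_moments hψ2 hl2 horth,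
          smul_zero, sub_zero, neg_add_cancel]

/-- Orthogonality of the quantile-process influence function and the score.
If the score `ℓ̇_θ` is centered (i), the influence function `ψ_θ` satisfies the regularity
condition `E_θ[ψ_θ(X) ℓ̇_θ(X)ᵀ] = I_k` (ii), and `v = ∇_θ F_θ⁻¹(u)` satisfies the gradient
identity (iii), then `E_θ[ℓ̇_θ(X) · g_θ(X, u)] = 0`, where
`g_θ(x,u) = (1{x ≤ F_θ⁻¹(u)} - u)/f_θ(F_θ⁻¹(u)) + ψ_θ(x)ᵀ v`. -/
theorem score_orthogonal_to_quantile_influence {k : ℕ}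
    (P : Measure ℝ) [IsProbabilityMeasure P]
    (f : ℝ → ℝ) (hfc : Continuous f) (hfpos : ∀ x : ℝ, 0 < f x)
    -- `P` has density `f` with respect to Lebesgue measure
    (hdens : P = volume.withDensity fun x => ENNReal.ofReal (f x))
    -- square-integrable score and influence function
    (l ψ : ℝ → EuclideanSpace ℝ (Fin k))
    (hl2 : MemLp l 2 P) (hψ2 : MemLp ψ 2 P)
    -- `q = F⁻¹(u)` is the `u`-quantile
    (u : ℝ) (hu : u ∈ Set.Ioo (0 : ℝ) 1) (q : ℝ)
    (hq : P (Set.Iic q) = ENNReal.ofReal u)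
    -- (i) the score is centered
    (hl0 : (∫ x, l x ∂P) = 0)
    -- (ii) `E[ψ(X) l(X)ᵀ] = I_k`
    (horth : ∀ i j : Fin k, ∫ x, ψ x i * l x j ∂P = if i = j then (1 : ℝ) else 0)
    -- (iii) gradient identity for the quantile: `v = -(1/f(q)) E[l(X) 1{X ≤ q}]`
    (v : EuclideanSpace ℝ (Fin k))
    (hv : v = -(f q)⁻¹ • ∫ x, ((Set.Iic q).indicator (fun _ => (1 : ℝ)) x) • l x ∂P) :
    ∫ x, (((Set.Iic q).indicator (fun _ => (1 : ℝ)) x - u) / f q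
        + (inner ℝ (ψ x) v : ℝ)) • l x ∂P = 0 :=
  score_orthogonal_to_quantile_influence_general P f l ψ hl2 hψ2 u q hl0 horth v hv
end
end
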